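/- arXiv:math/0503502 — 2 statements merged into one kernel-verified Lean document; each statement's English description precedes it below -/
import Mathlib

section
/- Suppose τ : ℤ^D → 𝕋 is an injective group homomorphism with dense image. Let 𝒫 and 𝒬 be 𝒜-labelled open partitions of 𝕋 and let t ∈ 𝕋̃(𝒫) ∩ 𝕋̃(𝒬). Then the Cesàro density of the disagreement set {ℓ ∈ ℤ^D : 𝒫_σ(t)_ℓ ≠ 𝒬_σ(t)_ℓ} exists (the limit over boxes 𝔹(N) exists), and d_△(𝒫,𝒬) = 2 · d_B(𝒫_σ(t), 𝒬_σ(t)). In particular the map sending an open partition 𝒫 with 0 ∈ 𝕋̃(𝒫) to 𝒫_σ(0) is a distance-halving isometry from d_△ to d_B. -/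
open MeasureTheory Filter Topology
open scoped ENNReal

noncomputable section

/-- The `K`-dimensional torus `𝕋 = (ℝ/ℤ)^K`, with its (sup) quotient metric `d`
and Haar (Lebesgue) probability measure `volume`. -/
abbrev Torus (K : ℕ) := Fin K → AddCircle (1 : ℝ)

/-- The lattice `𝕃 = ℤ^D`. -/
abbrev Zd (D : ℕ) := Fin D → ℤ

/-- The box `𝔹(N) = {-N,…,N-1}^D ⊆ ℤ^D`. -/
def box (D N : ℕ) : Finset (Zd D) :=
  Fintype.piFinset fun _ => Finset.Ico (-(N : ℤ)) (N : ℤ)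

open Classical in
/-- `#(J ∩ 𝔹(N)) / (2N)^D`. -/
def densSeq (D : ℕ) (J : Set (Zd D)) (N : ℕ) : ℝ :=
  ((box D N).filter (fun ℓ => ℓ ∈ J)).card / ((2 * N : ℕ) : ℝ) ^ D

/-- The upper Cesàro density `d̄(J)` of `J ⊆ ℤ^D`. -/
def upperDens (D : ℕ) (J : Set (Zd D)) : ℝ :=
  Filter.limsup (densSeq D J) Filter.atTop

/-- The Besicovitch pseudometric `d_B` on `𝒜^{ℤ^D}`. -/
def dB {A : Type*} (D : ℕ) (p q : Zd D → A) : ℝ :=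
  upperDens D {ℓ | p ℓ ≠ q ℓ}

variable {K D : ℕ} {A : Type*}

/-- An `𝒜`-labelled measurable partition of the torus: pairwise disjoint measurable
cells whose union has full measure. -/
structure IsMeasPartition (P : A → Set (Torus K)) : Prop where
  meas : ∀ a, MeasurableSet (P a)
  disj : Pairwise (Function.onFun Disjoint P)
  full : volume (⋃ a, P a) = 1

/-- An `𝒜`-labelled open partition of the torus: pairwise disjoint open cells whose
union is dense and has full measure. -/
structure IsOpenPartition (P : A → Set (Torus K)) : Prop where
  isOpen : ∀ a, IsOpen (P a)
  disj : Pairwise (Function.onFun Disjoint P)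
  dense : Dense (⋃ a, P a)
  full : volume (⋃ a, P a) = 1

/-- `lab` realizes the partition `P` as an `𝒜`-valued function (each cell is labelled
by its index). -/
def IsLabel (P : A → Set (Torus K)) (lab : Torus K → A) : Prop :=
  ∀ a, ∀ t ∈ P a, lab t = a

/-- The symmetric-difference pseudometric `d_△(𝒫,𝒬) = Σ_a λ(P_a △ Q_a)`. -/
def dSym [Fintype A] (P Q : A → Set (Torus K)) : ℝ :=
  ∑ a, (volume (symmDiff (P a) (Q a))).toReal

/-- `𝕋̃(𝒫) = ⋂_ℓ σ^ℓ(P_*)`, where `σ^ℓ(t) = t + τ(ℓ)` and `P_* = ⋃_a P_a`. -/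
def Ttil (τ : Zd D →+ Torus K) (P : A → Set (Torus K)) : Set (Torus K) :=
  ⋂ ℓ : Zd D, (fun x => x + τ ℓ) '' (⋃ a, P a)

/-- The trajectory map `𝒫_σ(t)_ℓ = 𝒫(σ^ℓ t)`, expressed via a labelling `lab` of `𝒫`. -/
def traj (τ : Zd D →+ Torus K) (lab : Torus K → A) (t : Torus K) : Zd D → A :=
  fun ℓ => lab (t + τ ℓ)

/-- A partition is simple if `0` is its only translational symmetry. -/
def IsSimple (P : A → Set (Torus K)) : Prop :=
  ∀ s : Torus K, (∀ a, volume (symmDiff (P a) ((fun x => x + s) '' P a)) = 0) → s = 0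

/-- The cellular automaton `Φ` with neighbourhood `B` and local rule `φ`:
`Φ(x)_ℓ = φ((x_{ℓ+b})_{b∈B})`. -/
def caMap {D : ℕ} {A : Type*} (B : Finset (Zd D)) (φ : (B → A) → A)
    (x : Zd D → A) : Zd D → A :=
  fun ℓ => φ fun b => x (ℓ + (b : Zd D))

/-- The induced map `Φ̂` on partitions: `Q_a = ⋃_{c : φ(c)=a} ⋂_{b∈B} σ^{-b}(P_{c_b})`. -/
def inducedPart (τ : Zd D →+ Torus K) (B : Finset (Zd D)) (φ : (B → A) → A)
    (P : A → Set (Torus K)) : A → Set (Torus K) :=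
  fun a => ⋃ (c : B → A) (_ : φ c = a), ⋂ b : B, {t | t + τ (b : Zd D) ∈ P (c b)}

/-- `x ∈ QS_σ`: `x` is a `σ`-quasisturmian sequence, i.e. the `𝒫`-trajectory of some
point of `𝕋̃(𝒫)` for some open partition `𝒫`. -/
def IsQSSeq (τ : Zd D →+ Torus K) (x : Zd D → A) : Prop :=
  ∃ (P : A → Set (Torus K)) (lab : Torus K → A) (t : Torus K),
    IsOpenPartition P ∧ IsLabel P lab ∧ t ∈ Ttil τ P ∧ x = traj τ lab t

/-! The disagreement set of the trajectories of `t` is the set of return times of the orbit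
`t + τ ℓ` to the open set `E` of points lying in cells of `𝒫` and `𝒬` with different labels.
Since `τ` has dense image, every nontrivial character of `𝕋` is nontrivial on `τ(ℤ^D)`, so its
box averages along the orbit vanish asymptotically (geometric sums); by Stone–Weierstrass the
uniform measures on the orbit boxes converge weakly to Haar measure. The frontier of `E` lies
outside `P_* ∩ Q_*`, hence is null, so by the portmanteau theorem the density of return times
to `E` is `λ(E)`. Finally every point of `E` is counted once in `Σ_a λ(P_a \ Q_a)` and once in
`Σ_a λ(Q_a \ P_a)`, so `d_△(𝒫,𝒬) = 2 λ(E)`. -/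

open Finset hiding box

section AddChar

theorem AddChar.map_sum_eq_prod {ι G M : Type*} [AddCommMonoid G] [CommMonoid M]
    (ψ : AddChar G M) (s : Finset ι) (f : ι → G) : ψ (∑ i ∈ s, f i) = ∏ i ∈ s, ψ (f i) := by
  induction s using Finset.cons_induction with
  | empty => simp
  | cons i s hi ih => rw [sum_cons, prod_cons, ψ.map_add_eq_mul, ih]

theorem AddChar.apply_eq_prod_zpow {ι M : Type*} [Fintype ι] [DecidableEq ι]
    [DivisionCommMonoid M] (ψ : AddChar (ι → ℤ) M) (ℓ : ι → ℤ) :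
    ψ ℓ = ∏ j, ψ (Pi.single j 1) ^ ℓ j := by
  conv_lhs => rw [← Finset.univ_sum_single ℓ, ψ.map_sum_eq_prod]
  refine prod_congr rfl fun j _ ↦ ?_
  rw [← ψ.map_zsmul_eq_zpow, ← Pi.single_smul, smul_eq_mul, mul_one]

theorem AddChar.compAddMonoidHom_ne_one {G H M : Type*} [AddMonoid G] [AddMonoid H] [Monoid M]
    [TopologicalSpace H] [TopologicalSpace M] [T2Space M] {ψ : AddChar H M}
    (hψ : Continuous ψ) (hψ1 : ψ ≠ 1) {f : G →+ H} (hf : DenseRange f) :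
    ψ.compAddMonoidHom f ≠ 1 := by
  intro h
  refine hψ1 (DFunLike.coe_injective (hf.equalizer hψ continuous_const (funext fun x ↦ ?_)))
  exact DFunLike.congr_fun h x

theorem AddChar.integral_eq_zero_of_ne_one {G : Type*} [AddGroup G] [MeasurableSpace G]
    [MeasurableAdd G] (μ : Measure G) [μ.IsAddRightInvariant] {ψ : AddChar G ℂ} (hψ : ψ ≠ 1) :
    ∫ x, ψ x ∂μ = 0 := by
  obtain ⟨s, hs⟩ := AddChar.ne_one_iff.1 hψ
  have htranslate : ∫ x, ψ x ∂μ = (∫ x, ψ x ∂μ) * ψ s := by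
    conv_lhs => rw [← integral_add_right_eq_self ψ s]
    simp_rw [ψ.map_add_eq_mul, integral_mul_const]
  have : (∫ x, ψ x ∂μ) * (ψ s - 1) = 0 := by linear_combination -htranslate
  exact (mul_eq_zero.1 this).resolve_right (sub_ne_zero.2 hs)

end AddChar

section WeylSums

theorem mul_sum_zpow_Ico {𝕜 : Type*} [Field 𝕜] {z : 𝕜} (hz : z ≠ 0) {a b : ℤ} (hab : a ≤ b) :
    (z - 1) * ∑ k ∈ Ico a b, z ^ k = z ^ b - z ^ a := by
  induction b, hab using Int.leInduction with
  | base => simp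
  | succ b hab ih =>
    rw [← Order.succ_eq_add_one, ← insert_Ico_right_eq_Ico_succ hab, sum_insert (by simp),
      mul_add, ih, Order.succ_eq_add_one, zpow_add_one₀ hz]
    ring

theorem norm_sum_zpow_Ico_le {z : ℂ} (hz : ‖z‖ = 1) (hz1 : z ≠ 1) (a b : ℤ) :
    ‖∑ k ∈ Ico a b, z ^ k‖ ≤ 2 / ‖z - 1‖ := by
  rcases lt_or_ge b a with hba | hab
  · rw [Ico_eq_empty_of_le hba.le, sum_empty, norm_zero]
    positivity
  have hz0 : z ≠ 0 := by rintro rfl; simp at hz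
  have hz1' : z - 1 ≠ 0 := sub_ne_zero.2 hz1
  rw [← mul_div_cancel_left₀ (∑ k ∈ Ico a b, z ^ k) hz1', mul_sum_zpow_Ico hz0 hab, norm_div]
  gcongr
  calc ‖z ^ b - z ^ a‖ ≤ ‖z ^ b‖ + ‖z ^ a‖ := norm_sub_le _ _
    _ = 2 := by rw [norm_zpow, norm_zpow, hz, one_zpow, one_zpow]; norm_num

theorem card_Ico_neg_self (N : ℕ) : #(Ico (-(N : ℤ)) N) = 2 * N := by
  rw [Int.card_Ico]
  omega

theorem card_box (D N : ℕ) : #(box D N) = (2 * N) ^ D := by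
  rw [box, Fintype.card_piFinset]
  simp only [card_Ico_neg_self, prod_const, card_univ, Fintype.card_fin]

theorem norm_average_zpow_Ico_le {z : ℂ} (hz : ‖z‖ = 1) (N : ℕ) :
    ‖((2 * N : ℕ) : ℂ)⁻¹ * ∑ k ∈ Ico (-(N : ℤ)) N, z ^ k‖ ≤ 1 := by
  have hsum : ‖∑ k ∈ Ico (-(N : ℤ)) N, z ^ k‖ ≤ 2 * N := by
    refine (norm_sum_le_of_le _ fun k _ ↦ (norm_zpow z k).trans_le (by rw [hz, one_zpow])).trans ?_
    rw [sum_const, card_Ico_neg_self, nsmul_one, Nat.cast_mul, Nat.cast_ofNat]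
  rw [norm_mul, norm_inv, Complex.norm_natCast]
  rcases N.eq_zero_or_pos with rfl | hN
  · simp
  · rw [inv_mul_le_one₀ (by positivity)]
    exact_mod_cast hsum

theorem tendsto_average_zpow_Ico {z : ℂ} (hz : ‖z‖ = 1) (hz1 : z ≠ 1) :
    Tendsto (fun N : ℕ ↦ ((2 * N : ℕ) : ℂ)⁻¹ * ∑ k ∈ Ico (-(N : ℤ)) N, z ^ k) atTop (𝓝 0) := by
  refine squeeze_zero_norm (fun N ↦ ?_)
    (tendsto_const_div_atTop_nhds_zero_nat (‖z - 1‖⁻¹))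
  rw [norm_mul, norm_inv, Complex.norm_natCast]
  calc ((2 * N : ℕ) : ℝ)⁻¹ * ‖∑ k ∈ Ico (-(N : ℤ)) N, z ^ k‖
      ≤ ((2 * N : ℕ) : ℝ)⁻¹ * (2 / ‖z - 1‖) := by
        gcongr; exact norm_sum_zpow_Ico_le hz hz1 _ _
    _ = ‖z - 1‖⁻¹ / N := by push_cast; field_simp

theorem tendsto_box_average_addChar {ψ : AddChar (Zd D) ℂ} (hψ : ∀ ℓ, ‖ψ ℓ‖ = 1)
    (hψ1 : ψ ≠ 1) :
    Tendsto (fun N ↦ (#(box D N) : ℂ)⁻¹ * ∑ ℓ ∈ box D N, ψ ℓ) atTop (𝓝 0) := by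
  classical
  set z : Fin D → ℂ := fun j ↦ ψ (Pi.single j 1)
  obtain ⟨j₀, hj₀⟩ : ∃ j, z j ≠ 1 := by
    by_contra! h
    refine hψ1 (AddChar.eq_one_iff.2 fun ℓ ↦ ?_)
    simp [ψ.apply_eq_prod_zpow ℓ, z, h]
  have hfactor : ∀ N, (#(box D N) : ℂ)⁻¹ * ∑ ℓ ∈ box D N, ψ ℓ
      = ∏ j, ((2 * N : ℕ) : ℂ)⁻¹ * ∑ k ∈ Ico (-(N : ℤ)) N, z j ^ k := by
    intro N
    rw [prod_mul_distrib, prod_univ_sum, card_box, prod_const, card_univ, Fintype.card_fin]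
    push_cast
    rw [box, inv_pow]
    congr 1
    exact sum_congr rfl fun ℓ _ ↦ ψ.apply_eq_prod_zpow ℓ
  refine squeeze_zero_norm (fun N ↦ ?_) (tendsto_zero_iff_norm_tendsto_zero.1
    (tendsto_average_zpow_Ico (hψ _) hj₀))
  rw [hfactor, norm_prod, ← mul_prod_erase _ _ (mem_univ j₀)]
  exact mul_le_of_le_one_right (norm_nonneg _)
    (prod_le_one (fun j _ ↦ norm_nonneg _) fun j _ ↦ norm_average_zpow_Ico_le (hψ _) N)

end WeylSums

section WeakConvergence

variable {X : Type*} [TopologicalSpace X] [CompactSpace X] [MeasurableSpace X]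
  [OpensMeasurableSpace X]

theorem ContinuousMap.integrable (ν : Measure X) [IsFiniteMeasure ν] (f : C(X, ℂ)) :
    Integrable f ν :=
  (BoundedContinuousFunction.mkOfCompact f).integrable ν

theorem ContinuousMap.dist_integral_le (ν : Measure X) [IsProbabilityMeasure ν]
    (f g : C(X, ℂ)) : dist (∫ x, f x ∂ν) (∫ x, g x ∂ν) ≤ dist f g := by
  rw [dist_eq_norm, dist_eq_norm, ← integral_sub (f.integrable ν) (g.integrable ν)]
  exact ((BoundedContinuousFunction.mkOfCompact (f - g)).norm_integral_le_norm ν).trans_eq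
    (BoundedContinuousFunction.norm_mkOfCompact _)

theorem ProbabilityMeasure.tendsto_of_forall_tendsto_integral_of_dense_span {ι : Type*}
    {L : Filter ι} {μs : ι → ProbabilityMeasure X} {μ : ProbabilityMeasure X} {S : Set C(X, ℂ)}
    (hS : (Submodule.span ℂ S).topologicalClosure = ⊤)
    (h : ∀ g ∈ S, Tendsto (fun i ↦ ∫ x, g x ∂(μs i : Measure X)) L
      (𝓝 (∫ x, g x ∂(μ : Measure X)))) :
    Tendsto μs L (𝓝 μ) := by
  let G : Set C(X, ℂ) :=
    {g | Tendsto (fun i ↦ ∫ x, g x ∂(μs i : Measure X)) L (𝓝 (∫ x, g x ∂(μ : Measure X)))}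
  have hG : IsClosed G :=
    (Metric.equicontinuous_of_continuity_modulus id tendsto_id _
      fun f g i ↦ ContinuousMap.dist_integral_le (μs i) f g).isClosed_setOfPred_tendsto
      (LipschitzWith.of_dist_le_mul (K := 1) fun f g ↦ by
        simpa using ContinuousMap.dist_integral_le (μ : Measure X) f g).continuous
  have hspan : (Submodule.span ℂ S : Set C(X, ℂ)) ⊆ G := by
    intro g hg
    induction hg using Submodule.span_induction with
    | mem g hg => exact h g hg
    | zero => simpa [G] using tendsto_const_nhds
    | add f g _ _ hf hg =>
      simpa only [G, Set.mem_ofPred_eq, ContinuousMap.add_apply,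
        integral_add (f.integrable _) (g.integrable _)] using hf.add hg
    | smul c g _ hg =>
      simpa only [G, Set.mem_ofPred_eq, ContinuousMap.smul_apply, smul_eq_mul,
        integral_const_mul] using hg.const_mul c
  rw [ProbabilityMeasure.tendsto_iff_forall_integral_rclike_tendsto ℂ]
  intro f
  have hf : (f : C(X, ℂ)) ∈ closure (Submodule.span ℂ S : Set C(X, ℂ)) := by
    rw [← Submodule.topologicalClosure_coe, hS]
    trivial
  exact hG.closure_subset_iff.2 hspan hf

end WeakConvergence

instance : IsProbabilityMeasure (volume : Measure UnitAddCircle) :=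
  ⟨by simp [AddCircle.measure_univ]⟩

namespace UnitAddTorus

variable {d : Type*} [Fintype d]

theorem mFourier_injective : Function.Injective (mFourier (d := d)) := fun _ _ h ↦
  orthonormal_mFourier.linearIndependent.injective (by simp only [mFourierLp, h])

def mFourierChar (n : d → ℤ) : AddChar (UnitAddTorus d) ℂ where
  toFun := mFourier n
  map_zero_eq_one' := by simp [mFourier]
  map_add_eq_mul' x y := by
    simp only [mFourier, ContinuousMap.coe_mk, Pi.add_apply, fourier_apply, smul_add,
      AddCircle.toCircle_add, Circle.coe_mul, prod_mul_distrib]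

theorem norm_mFourierChar_apply (n : d → ℤ) (x : UnitAddTorus d) : ‖mFourierChar n x‖ = 1 := by
  change ‖∏ i, fourier (n i) (x i)‖ = 1
  simp only [norm_prod, fourier_apply, Circle.norm_coe, prod_const_one]

theorem mFourierChar_ne_one {n : d → ℤ} (hn : n ≠ 0) : mFourierChar n ≠ 1 := by
  intro h
  refine hn (mFourier_injective (ContinuousMap.ext fun x ↦ ?_))
  rw [mFourier_zero]
  exact DFunLike.congr_fun h x

end UnitAddTorus

section BoxMeasure

variable {X : Type*} [MeasurableSpace X]

/-- The index is shifted because `𝔹(0)` is empty. -/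
def boxMeasure (D N : ℕ) (g : Zd D → X) : ProbabilityMeasure X :=
  ⟨(#(box D (N + 1)) : ℝ≥0∞)⁻¹ • ∑ ℓ ∈ box D (N + 1), Measure.dirac (g ℓ), by
    constructor
    simp only [Measure.smul_apply, Measure.coe_finsetSum, Finset.sum_apply, measure_univ,
      sum_const, nsmul_one, smul_eq_mul]
    exact ENNReal.inv_mul_cancel (by simp [card_box]) (by simp)⟩

theorem boxMeasure_apply_toReal [MeasurableSingletonClass X] (D N : ℕ) (g : Zd D → X)
    (s : Set X) :
    ((boxMeasure D N g : Measure X) s).toReal = densSeq D (g ⁻¹' s) (N + 1) := by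
  classical
  simp only [boxMeasure, ProbabilityMeasure.coe_mk, Measure.smul_apply, Measure.coe_finsetSum,
    Finset.sum_apply, Measure.dirac_apply, Set.indicator_apply, Set.mem_preimage, Pi.one_apply,
    sum_boole, smul_eq_mul, ENNReal.toReal_mul, ENNReal.toReal_inv, ENNReal.toReal_natCast,
    densSeq, card_box]
  rw [inv_mul_eq_div, Nat.cast_pow]

theorem integral_boxMeasure [MeasurableSingletonClass X] {E : Type*} [NormedAddCommGroup E]
    [NormedSpace ℝ E] [CompleteSpace E] (D N : ℕ) (g : Zd D → X) (f : X → E) :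
    ∫ x, f x ∂(boxMeasure D N g : Measure X)
      = (#(box D (N + 1)) : ℝ)⁻¹ • ∑ ℓ ∈ box D (N + 1), f (g ℓ) := by
  simp [boxMeasure, integral_smul_measure,
    integral_finsetSum_measure fun _ _ ↦ integrable_dirac enorm_lt_top]

end BoxMeasure

section Equidistribution

open UnitAddTorus

variable (τ : Zd D →+ Torus K)

theorem tendsto_integral_mFourier_boxMeasure (hdense : DenseRange τ) (t : Torus K)
    (n : Fin K → ℤ) :
    Tendsto (fun N ↦ ∫ x, mFourier n x ∂(boxMeasure D N (t + τ ·) : Measure (Torus K)))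
      atTop (𝓝 (∫ x : Torus K, mFourier n x)) := by
  rcases eq_or_ne n 0 with rfl | hn
  · simp [mFourier_zero]
  set χ := mFourierChar n
  have hψ1 : χ.compAddMonoidHom τ ≠ 1 :=
    χ.compAddMonoidHom_ne_one (mFourier n).continuous (mFourierChar_ne_one hn) hdense
  have hψ : ∀ ℓ, ‖χ.compAddMonoidHom τ ℓ‖ = 1 := fun ℓ ↦ norm_mFourierChar_apply n (τ ℓ)
  have hbox : ∀ N, ∫ x, mFourier n x ∂(boxMeasure D N (t + τ ·) : Measure (Torus K))
      = χ t * ((#(box D (N + 1)) : ℂ)⁻¹ * ∑ ℓ ∈ box D (N + 1), χ.compAddMonoidHom τ ℓ) := by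
    intro N
    rw [integral_boxMeasure, Complex.real_smul, mul_sum, mul_sum, mul_sum]
    refine sum_congr rfl fun ℓ _ ↦ ?_
    have hadd : mFourier n (t + τ ℓ) = χ t * χ (τ ℓ) := χ.map_add_eq_mul t (τ ℓ)
    rw [hadd, AddChar.compAddMonoidHom_apply]
    push_cast
    ring
  have hχ : ∫ x : Torus K, mFourier n x = 0 :=
    χ.integral_eq_zero_of_ne_one volume (mFourierChar_ne_one hn)
  rw [hχ]
  simpa [hbox] using
    ((tendsto_box_average_addChar hψ hψ1).comp (tendsto_add_atTop_nat 1)).const_mul (χ t)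

theorem tendsto_boxMeasure_orbit (hdense : DenseRange τ) (t : Torus K) :
    Tendsto (fun N ↦ boxMeasure D N (t + τ ·)) atTop
      (𝓝 (⟨volume, inferInstance⟩ : ProbabilityMeasure (Torus K))) :=
  ProbabilityMeasure.tendsto_of_forall_tendsto_integral_of_dense_span
    span_mFourier_closure_eq_top
    (by rintro _ ⟨n, rfl⟩; exact tendsto_integral_mFourier_boxMeasure τ hdense t n)

theorem tendsto_densSeq_orbit (hdense : DenseRange τ) (t : Torus K) {E : Set (Torus K)}
    (hE : volume (frontier E) = 0) :
    Tendsto (densSeq D {ℓ | t + τ ℓ ∈ E}) atTop (𝓝 (volume E).toReal) := by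
  have h := (ENNReal.tendsto_toReal (measure_ne_top volume E)).comp
    (ProbabilityMeasure.tendsto_measure_of_null_frontier_of_tendsto'
      (tendsto_boxMeasure_orbit τ hdense t) hE)
  simp only [Function.comp_def, boxMeasure_apply_toReal] at h
  exact (tendsto_add_atTop_iff_nat 1).1 h

end Equidistribution

section Disagreement

variable {X : Type*} {P Q : A → Set X}

def disagreement (P Q : A → Set X) : Set X :=
  ⋃ (a) (b) (_ : a ≠ b), P a ∩ Q b

theorem disagreement_comm (P Q : A → Set X) : disagreement Q P = disagreement P Q := by
  ext x
  simp only [disagreement, Set.mem_iUnion, Set.mem_inter_iff]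
  exact ⟨fun ⟨a, b, hab, ha, hb⟩ ↦ ⟨b, a, hab.symm, hb, ha⟩,
    fun ⟨a, b, hab, ha, hb⟩ ↦ ⟨b, a, hab.symm, hb, ha⟩⟩

theorem mem_disagreement_iff (hP : Pairwise (Function.onFun Disjoint P))
    (hQ : Pairwise (Function.onFun Disjoint Q)) {x : X} {a b : A} (ha : x ∈ P a) (hb : x ∈ Q b) :
    x ∈ disagreement P Q ↔ a ≠ b := by
  simp only [disagreement, Set.mem_iUnion, Set.mem_inter_iff]
  refine ⟨fun ⟨a', b', hab', ha', hb'⟩ ↦ ?_, fun hab ↦ ⟨a, b, hab, ha, hb⟩⟩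
  rwa [hP.eq (Set.not_disjoint_iff.2 ⟨x, ha, ha'⟩), hQ.eq (Set.not_disjoint_iff.2 ⟨x, hb, hb'⟩)]

theorem isOpen_disagreement [TopologicalSpace X] (hPo : ∀ a, IsOpen (P a))
    (hQo : ∀ a, IsOpen (Q a)) : IsOpen (disagreement P Q) :=
  isOpen_iUnion fun a ↦ isOpen_iUnion fun b ↦ isOpen_iUnion fun _ ↦ (hPo a).inter (hQo b)

theorem frontier_disagreement_subset [TopologicalSpace X] (hPo : ∀ a, IsOpen (P a))
    (hQo : ∀ a, IsOpen (Q a)) (hP : Pairwise (Function.onFun Disjoint P))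
    (hQ : Pairwise (Function.onFun Disjoint Q)) :
    frontier (disagreement P Q) ⊆ ((⋃ a, P a) ∩ ⋃ a, Q a)ᶜ := by
  rintro x hx ⟨hxP, hxQ⟩
  obtain ⟨a, ha⟩ := Set.mem_iUnion.1 hxP
  obtain ⟨b, hb⟩ := Set.mem_iUnion.1 hxQ
  rw [(isOpen_disagreement hPo hQo).frontier_eq] at hx
  obtain rfl : a = b := by_contra fun hab ↦ hx.2 ((mem_disagreement_iff hP hQ ha hb).2 hab)
  obtain ⟨y, ⟨hya, hyb⟩, hy⟩ := mem_closure_iff.1 hx.1 _ ((hPo a).inter (hQo a)) ⟨ha, hb⟩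
  exact (mem_disagreement_iff hP hQ hya hyb).1 hy rfl

theorem sum_measure_sdiff_eq [Fintype A] [MeasurableSpace X] (μ : Measure X)
    (hPm : ∀ a, MeasurableSet (P a)) (hQm : ∀ a, MeasurableSet (Q a))
    (hP : Pairwise (Function.onFun Disjoint P)) (hQ : Pairwise (Function.onFun Disjoint Q))
    (hQfull : μ (⋃ a, Q a)ᶜ = 0) :
    ∑ a, μ (P a \ Q a) = μ (disagreement P Q) := by
  have hdisj : Pairwise (Function.onFun Disjoint fun a ↦ P a \ Q a) :=
    fun a b hab ↦ (hP hab).mono Set.sdiff_subset Set.sdiff_subset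
  rw [← (measure_iUnion hdisj fun a ↦ (hPm a).diff (hQm a)).trans (tsum_fintype _)]
  have hsub : disagreement P Q ⊆ ⋃ a, P a \ Q a := by
    simp only [disagreement, Set.iUnion_subset_iff]
    intro a b hab x ⟨ha, hb⟩
    exact Set.mem_iUnion.2 ⟨a, ha, fun ha' ↦ hab (hQ.eq (Set.not_disjoint_iff.2 ⟨x, ha', hb⟩))⟩
  have hsup : ⋃ a, P a \ Q a ⊆ disagreement P Q ∪ (⋃ a, Q a)ᶜ := by
    simp only [Set.iUnion_subset_iff]
    intro a x ⟨ha, hna⟩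
    by_cases hx : x ∈ ⋃ b, Q b
    · obtain ⟨b, hb⟩ := Set.mem_iUnion.1 hx
      exact Or.inl ((mem_disagreement_iff hP hQ ha hb).2 fun hab ↦ hna (hab ▸ hb))
    · exact Or.inr hx
  refine le_antisymm ?_ (measure_mono hsub)
  calc μ (⋃ a, P a \ Q a) ≤ μ (disagreement P Q ∪ (⋃ a, Q a)ᶜ) := measure_mono hsup
    _ ≤ μ (disagreement P Q) + μ (⋃ a, Q a)ᶜ := measure_union_le _ _
    _ = μ (disagreement P Q) := by rw [hQfull, add_zero]

end Disagreement

namespace IsOpenPartition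

variable {P Q : A → Set (Torus K)}

theorem volume_compl_iUnion (hP : IsOpenPartition P) : volume (⋃ a, P a)ᶜ = 0 :=
  (prob_compl_eq_zero_iff (isOpen_iUnion hP.isOpen).measurableSet).2 hP.full

theorem volume_frontier_disagreement (hP : IsOpenPartition P) (hQ : IsOpenPartition Q) :
    volume (frontier (disagreement P Q)) = 0 := by
  refine measure_mono_null (frontier_disagreement_subset hP.isOpen hQ.isOpen hP.disj hQ.disj) ?_
  rw [Set.compl_inter]
  exact measure_union_null hP.volume_compl_iUnion hQ.volume_compl_iUnion

theorem dSym_eq_two_mul_volume_disagreement [Fintype A] (hP : IsOpenPartition P)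
    (hQ : IsOpenPartition Q) : dSym P Q = 2 * (volume (disagreement P Q)).toReal := by
  have hsymm : ∀ a, volume (symmDiff (P a) (Q a)) = volume (P a \ Q a) + volume (Q a \ P a) :=
    fun a ↦ measure_symmDiff_eq (hP.isOpen a).measurableSet.nullMeasurableSet
      (hQ.isOpen a).measurableSet.nullMeasurableSet
  have hPm a := (hP.isOpen a).measurableSet
  have hQm a := (hQ.isOpen a).measurableSet
  rw [dSym, ← ENNReal.toReal_sum fun a _ ↦ measure_ne_top _ _, sum_congr rfl fun a _ ↦ hsymm a,
    sum_add_distrib, sum_measure_sdiff_eq volume hPm hQm hP.disj hQ.disj hQ.volume_compl_iUnion,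
    sum_measure_sdiff_eq volume hQm hPm hQ.disj hP.disj hP.volume_compl_iUnion,
    disagreement_comm, ENNReal.toReal_add (measure_ne_top _ _) (measure_ne_top _ _), two_mul]

end IsOpenPartition

theorem add_mem_iUnion_of_mem_Ttil {τ : Zd D →+ Torus K} {P : A → Set (Torus K)} {t : Torus K}
    (ht : t ∈ Ttil τ P) (ℓ : Zd D) : t + τ ℓ ∈ ⋃ a, P a := by
  obtain ⟨s, hs, rfl⟩ := Set.mem_iInter.1 ht (-ℓ)
  simpa using hs

theorem setOf_traj_ne_eq {τ : Zd D →+ Torus K} {P Q : A → Set (Torus K)}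
    (hP : Pairwise (Function.onFun Disjoint P)) (hQ : Pairwise (Function.onFun Disjoint Q))
    {labP labQ : Torus K → A} (hlabP : IsLabel P labP) (hlabQ : IsLabel Q labQ) {t : Torus K}
    (htP : t ∈ Ttil τ P) (htQ : t ∈ Ttil τ Q) :
    {ℓ | traj τ labP t ℓ ≠ traj τ labQ t ℓ} = {ℓ | t + τ ℓ ∈ disagreement P Q} := by
  ext ℓ
  obtain ⟨a, ha⟩ := Set.mem_iUnion.1 (add_mem_iUnion_of_mem_Ttil htP ℓ)
  obtain ⟨b, hb⟩ := Set.mem_iUnion.1 (add_mem_iUnion_of_mem_Ttil htQ ℓ)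
  simp only [Set.mem_ofPred_eq, traj, hlabP a _ ha, hlabQ b _ hb, mem_disagreement_iff hP hQ ha hb]

theorem dSym_eq_two_mul_dB_general {K D : ℕ} {A : Type*} [Fintype A]
    (τ : Zd D →+ Torus K) (hdense : DenseRange τ)
    (P Q : A → Set (Torus K)) (hP : IsOpenPartition P) (hQ : IsOpenPartition Q)
    (labP labQ : Torus K → A) (hlabP : IsLabel P labP) (hlabQ : IsLabel Q labQ)
    (t : Torus K) (ht : t ∈ Ttil τ P ∩ Ttil τ Q) :
    (∃ c : ℝ, Filter.Tendsto
        (densSeq D {ℓ : Zd D | traj τ labP t ℓ ≠ traj τ labQ t ℓ}) Filter.atTop (nhds c)) ∧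
    dSym P Q = 2 * dB D (traj τ labP t) (traj τ labQ t) := by
  have hlim : Tendsto (densSeq D {ℓ | traj τ labP t ℓ ≠ traj τ labQ t ℓ}) atTop
      (𝓝 (volume (disagreement P Q)).toReal) := by
    rw [setOf_traj_ne_eq hP.disj hQ.disj hlabP hlabQ ht.1 ht.2]
    exact tendsto_densSeq_orbit τ hdense t (hP.volume_frontier_disagreement hQ)
  refine ⟨⟨_, hlim⟩, ?_⟩
  rw [hP.dSym_eq_two_mul_volume_disagreement hQ, dB, upperDens, hlim.limsup_eq]

/-- If `t ∈ 𝕋̃(𝒫) ∩ 𝕋̃(𝒬)` then the Cesàro density of the disagreement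
set of the two trajectories exists, and `d_△(𝒫,𝒬) = 2·d_B(𝒫_σ(t), 𝒬_σ(t))`. -/
theorem dSym_eq_two_mul_dB {K D : ℕ} (hK : 1 ≤ K) (hD : 1 ≤ D) {A : Type*} [Fintype A]
    (τ : Zd D →+ Torus K) (hinj : Function.Injective τ) (hdense : DenseRange τ)
    (P Q : A → Set (Torus K)) (hP : IsOpenPartition P) (hQ : IsOpenPartition Q)
    (labP labQ : Torus K → A) (hlabP : IsLabel P labP) (hlabQ : IsLabel Q labQ)
    (t : Torus K) (ht : t ∈ Ttil τ P ∩ Ttil τ Q) :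
    (∃ c : ℝ, Filter.Tendsto
        (densSeq D {ℓ : Zd D | traj τ labP t ℓ ≠ traj τ labQ t ℓ}) Filter.atTop (nhds c)) ∧
    dSym P Q = 2 * dB D (traj τ labP t) (traj τ labQ t) :=
  dSym_eq_two_mul_dB_general τ hdense P Q hP hQ labP labQ hlabP hlabQ t ht
end
end

section
/- Suppose τ : ℤ^D → 𝕋 is an injective group homomorphism with dense image. Let 𝒫 be a simple 𝒜-labelled measurable partition of 𝕋. Then the trajectory map 𝒫_σ is injective modulo null sets in the following sense: for every s ∈ 𝕋 with s ≠ 0, for λ-almost every t ∈ 𝕋̃(𝒫) with t + s ∈ 𝕋̃(𝒫), there exists ℓ ∈ ℤ^D with 𝒫(σ^ℓ(t)) ≠ 𝒫(σ^ℓ(t) + s); that is, 𝒫_σ(t) ≠ 𝒫_σ(t + s). -/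
open MeasureTheory Filter Topology
open scoped ENNReal

noncomputable section

variable {K D : ℕ} {A : Type*}

/-!
The set `C` of points `t` whose `τ`-orbit never separates `t` from `t + s` (every `t + τ ℓ`
lies in the same cell as `t + τ ℓ + s`) is measurable and `τ`-invariant, so by ergodicity of
the dense rotation action it is null or conull. If it were conull, then `P_a + s = P_a` a.e.
for every `a`, making `s ≠ 0` a symmetry of the simple partition `𝒫`. Hence `C` is null, and
for `t ∉ C` the trajectories of `t` and `t + s` differ.
-/

section OrbitCore

variable {G L : Type*} [AddGroup G] [AddGroup L] (τ : L →+ G)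

/-- The largest `τ`-invariant subset of `D`. -/
def orbitCore (D : Set G) : Set G :=
  ⋂ ℓ, (· + τ ℓ) ⁻¹' D

variable {τ} {D : Set G} {t : G}

theorem mem_orbitCore : t ∈ orbitCore τ D ↔ ∀ ℓ, t + τ ℓ ∈ D :=
  Set.mem_iInter

theorem orbitCore_subset : orbitCore τ D ⊆ D := fun t ht => by
  simpa using mem_orbitCore.1 ht 0

theorem preimage_add_orbitCore (ℓ₀ : L) : (· + τ ℓ₀) ⁻¹' orbitCore τ D = orbitCore τ D := by
  ext t
  simp only [Set.mem_preimage, mem_orbitCore, add_assoc, ← map_add]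
  exact ((add_left_surjective ℓ₀).forall (p := fun ℓ => t + τ ℓ ∈ D)).symm

theorem MeasurableSet.orbitCore [MeasurableSpace G] [MeasurableAdd G] [Countable L]
    (hD : MeasurableSet D) : MeasurableSet (orbitCore τ D) :=
  .iInter fun _ => hD.preimage (measurable_add_const _)

end OrbitCore

theorem aeconst_orbitCore_of_denseRange {G L : Type*} [AddCommGroup G] [TopologicalSpace G]
    [IsTopologicalAddGroup G] [R1Space G] [MeasurableSpace G] [BorelSpace G]
    [MeasurableAdd₂ G] [MeasurableNeg G] {μ : Measure G} [IsFiniteMeasure μ] [μ.InnerRegular]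
    [μ.IsAddLeftInvariant] [AddGroup L] [Countable L] {τ : L →+ G} (hτ : DenseRange τ)
    {D : Set G} (hD : MeasurableSet D) : EventuallyConst (orbitCore τ D) (ae μ) := by
  refine aeconst_of_dense_setOfPred_preimage_vadd_eq (M := G) hD.orbitCore.nullMeasurableSet
    (hτ.mono (Set.range_subset_iff.2 fun ℓ => ?_))
  simpa only [Set.mem_ofPred_eq, vadd_eq_add, add_comm (τ ℓ)] using preimage_add_orbitCore ℓ

section SameCell

variable {G : Type*} [AddGroup G]

def sameCell (P : A → Set G) (s : G) : Set G :=
  ⋃ a, P a ∩ (· + s) ⁻¹' P a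

variable {P : A → Set G} {s t : G}

theorem mem_sameCell : t ∈ sameCell P s ↔ ∃ a, t ∈ P a ∧ t + s ∈ P a := by
  simp [sameCell]

theorem MeasurableSet.sameCell [Countable A] [MeasurableSpace G] [MeasurableAdd G]
    (hP : ∀ a, MeasurableSet (P a)) : MeasurableSet (sameCell P s) :=
  .iUnion fun a => (hP a).inter ((hP a).preimage (measurable_add_const s))

theorem measure_symmDiff_image_add_eq_zero [MeasurableSpace G] [MeasurableAdd G]
    {μ : Measure G} [μ.IsAddRightInvariant] (hdisj : Pairwise (Function.onFun Disjoint P))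
    (h : ∀ᵐ t ∂μ, t ∈ sameCell P s) (a : A) :
    μ (symmDiff (P a) ((· + s) '' P a)) = 0 := by
  rw [Set.image_add_right, measure_symmDiff_eq_zero_iff, eventuallyEq_set]
  have h' : ∀ᵐ t ∂μ, t + -s ∈ sameCell P s :=
    (measurePreserving_add_right μ (-s)).quasiMeasurePreserving.ae h
  filter_upwards [h'] with t ht
  obtain ⟨b, hb, hbs⟩ := mem_sameCell.1 ht
  rw [neg_add_cancel_right] at hbs
  have hcell : ∀ {x}, x ∈ P b → (x ∈ P a ↔ a = b) := fun hx =>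
    ⟨fun hx' => hdisj.eq (Set.not_disjoint_iff.2 ⟨_, hx', hx⟩), fun hab => hab ▸ hx⟩
  rw [Set.mem_preimage, hcell hbs, hcell hb]

end SameCell

theorem Ttil_eq_orbitCore (τ : Zd D →+ Torus K) (P : A → Set (Torus K)) :
    Ttil τ P = orbitCore τ (⋃ a, P a) := by
  simp_rw [Ttil, orbitCore, Set.image_add_right, ← map_neg]
  exact neg_surjective.iInter_comp fun ℓ => (· + τ ℓ) ⁻¹' ⋃ a, P a

theorem mem_orbitCore_sameCell_of_label_eq {τ : Zd D →+ Torus K} {P : A → Set (Torus K)}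
    {lab : Torus K → A} (hlab : IsLabel P lab) {t s : Torus K} (ht : t ∈ Ttil τ P)
    (hts : t + s ∈ Ttil τ P) (h : ∀ ℓ, lab (t + τ ℓ) = lab (t + τ ℓ + s)) :
    t ∈ orbitCore τ (sameCell P s) := by
  rw [Ttil_eq_orbitCore, mem_orbitCore] at ht hts
  refine mem_orbitCore.2 fun ℓ => mem_sameCell.2 ?_
  obtain ⟨a, ha⟩ := Set.mem_iUnion.1 (ht ℓ)
  obtain ⟨b, hb⟩ := Set.mem_iUnion.1 (hts ℓ)
  rw [add_right_comm] at hb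
  obtain rfl : a = b := by rw [← hlab a _ ha, ← hlab b _ hb, h ℓ]
  exact ⟨a, ha, hb⟩

theorem simple_partition_traj_injective_ae_general {K D : ℕ}
    {A : Type*} [Fintype A]
    (τ : Zd D →+ Torus K) (hdense : DenseRange τ)
    (P : A → Set (Torus K)) (hP : IsMeasPartition P) (hsimple : IsSimple P)
    (lab : Torus K → A) (hlab : IsLabel P lab)
    (s : Torus K) (hs : s ≠ 0) :
    ∀ᵐ t ∂(volume : Measure (Torus K)),
      t ∈ Ttil τ P → t + s ∈ Ttil τ P →
        ∃ ℓ : Zd D, lab (t + τ ℓ) ≠ lab (t + τ ℓ + s) := by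
  rcases eventuallyConst_set.1 <|
    aeconst_orbitCore_of_denseRange (μ := volume) hdense (.sameCell (s := s) hP.meas)
    with hfull | hnull
  · have hsym : ∀ a, volume (symmDiff (P a) ((· + s) '' P a)) = 0 :=
      measure_symmDiff_image_add_eq_zero hP.disj (hfull.mono fun _ ht => orbitCore_subset ht)
    exact absurd (hsimple s hsym) hs
  · filter_upwards [hnull] with t htC ht hts
    by_contra! h
    exact htC (mem_orbitCore_sameCell_of_label_eq hlab ht hts h)

/-- If `𝒫` is a simple measurable partition then the trajectory map is
injective modulo null sets: for every `s ≠ 0`, for `λ`-a.e. `t`, if `t` and `t+s` both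
lie in `𝕋̃(𝒫)` then `𝒫_σ(t) ≠ 𝒫_σ(t+s)`. -/
theorem simple_partition_traj_injective_ae {K D : ℕ} (hK : 1 ≤ K) (hD : 1 ≤ D)
    {A : Type*} [Fintype A]
    (τ : Zd D →+ Torus K) (hinj : Function.Injective τ) (hdense : DenseRange τ)
    (P : A → Set (Torus K)) (hP : IsMeasPartition P) (hsimple : IsSimple P)
    (lab : Torus K → A) (hlab : IsLabel P lab)
    (s : Torus K) (hs : s ≠ 0) :
    ∀ᵐ t ∂(volume : Measure (Torus K)),
      t ∈ Ttil τ P → t + s ∈ Ttil τ P →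
        ∃ ℓ : Zd D, lab (t + τ ℓ) ≠ lab (t + τ ℓ + s) :=
  simple_partition_traj_injective_ae_general τ hdense P hP hsimple lab hlab s hs

end
end
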